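/- arXiv:1603.07005 — 2 statements merged into one kernel-verified Lean document; each statement's English description precedes it below -/
import Mathlib

section
/- Let A be an n×n real symmetric matrix, X ∈ ℝⁿ, and k ≥ 1. Then ⟨T_k(A - X⊗X), X⊗X⟩ = ⟨T_k(A), X⊗X⟩, where T_k is the k-th Newton transform. -/
open Matrix Polynomial

/-- The k-th elementary symmetric polynomial of the eigenvalues of an n×n matrix. -/
noncomputable def esymm {n : ℕ} (k : ℕ) (A : Matrix (Fin n) (Fin n) ℝ) : ℝ :=
  if k ≤ n then (-1 : ℝ) ^ k * (Matrix.charpoly A).coeff (n - k) else 0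

/-- The k-th Newton transform: `T_0(A) = I`, `T_k(A) = σ_k(A)·I − A·T_{k-1}(A)`. -/
noncomputable def newton {n : ℕ} : ℕ → Matrix (Fin n) (Fin n) ℝ → Matrix (Fin n) (Fin n) ℝ
  | 0, _ => 1
  | k + 1, A => esymm (k + 1) A • (1 : Matrix (Fin n) (Fin n) ℝ) - A * newton k A

lemma charpoly_natDeg {n : ℕ} (A : Matrix (Fin n) (Fin n) ℝ) :
    (Matrix.charpoly A).natDegree = n := by
  simpa using Matrix.charpoly_natDegree_eq_dim A

lemma charpoly_coeff_n {n : ℕ} (A : Matrix (Fin n) (Fin n) ℝ) :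
    (Matrix.charpoly A).coeff n = 1 := by
  have := (Matrix.charpoly_monic A).coeff_natDegree
  rwa [charpoly_natDeg] at this

lemma esymm_zero {n : ℕ} (A : Matrix (Fin n) (Fin n) ℝ) : esymm 0 A = 1 := by
  simp [esymm, charpoly_coeff_n]

lemma esymm_gt {n : ℕ} {k : ℕ} (h : n < k) (A : Matrix (Fin n) (Fin n) ℝ) : esymm k A = 0 := by
  simp [esymm, not_le.2 h]

lemma esymm_le {n : ℕ} {k : ℕ} (h : k ≤ n) (A : Matrix (Fin n) (Fin n) ℝ) :
    esymm k A = (-1 : ℝ) ^ k * (Matrix.charpoly A).coeff (n - k) := by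
  simp [esymm, h]

lemma newton_succ {n : ℕ} (A : Matrix (Fin n) (Fin n) ℝ) (k : ℕ) :
    newton (k + 1) A = esymm (k + 1) A • (1 : Matrix (Fin n) (Fin n) ℝ) - A * newton k A := rfl


lemma newton_eq_sum {n : ℕ} (A : Matrix (Fin n) (Fin n) ℝ) (k : ℕ) :
    newton k A = ∑ j ∈ Finset.range (k + 1), ((-1 : ℝ) ^ j * esymm (k - j) A) • A ^ j := by
  induction k with
  | zero => simp [newton, esymm_zero]
  | succ k ih =>
      rw [newton_succ, ih, Finset.mul_sum,
        Finset.sum_range_succ' (fun j => ((-1 : ℝ) ^ j * esymm (k + 1 - j) A) • A ^ j)]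
      simp only [Matrix.mul_smul, pow_zero, one_mul, Nat.sub_zero]
      rw [sub_eq_iff_eq_add]
      have h0 : (∑ j ∈ Finset.range (k + 1), ((-1:ℝ)^(j+1) * esymm (k + 1 - (j+1)) A) • A^(j+1)) +
          ∑ j ∈ Finset.range (k + 1), ((-1:ℝ)^j * esymm (k-j) A) • (A * A^j) = 0 := by
        rw [← Finset.sum_add_distrib]
        apply Finset.sum_eq_zero
        intro j hj
        rw [show k + 1 - (j+1) = k - j by omega, ← pow_succ' A j, pow_succ (-1:ℝ) j]
        module
      rw [add_right_comm, h0, zero_add]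

lemma newton_card_eq_zero {n : ℕ} (A : Matrix (Fin n) (Fin n) ℝ) : newton n A = 0 := by
  have hCH : Polynomial.aeval A (Matrix.charpoly A) = 0 := Matrix.aeval_self_charpoly A
  rw [Polynomial.aeval_eq_sum_range' (n := n + 1) (by rw [charpoly_natDeg]; omega)] at hCH
  rw [newton_eq_sum]
  have : ∀ j ∈ Finset.range (n + 1),
      ((-1 : ℝ) ^ j * esymm (n - j) A) • A ^ j = (-1 : ℝ) ^ n • ((Matrix.charpoly A).coeff j • A ^ j) := by
    intro j hj
    rw [Finset.mem_range] at hj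
    rw [esymm_le (by omega), show n - (n - j) = j by omega, smul_smul]
    congr 1
    rw [← mul_assoc, ← pow_add, show j + (n - j) = n by omega]
  rw [Finset.sum_congr rfl this, ← Finset.smul_sum, hCH, smul_zero]

lemma newton_ge_eq_zero {n : ℕ} (A : Matrix (Fin n) (Fin n) ℝ) (m : ℕ) (hm : n ≤ m) :
    newton m A = 0 := by
  obtain ⟨d, rfl⟩ := Nat.exists_eq_add_of_le hm
  induction d with
  | zero => exact newton_card_eq_zero A
  | succ d ih =>
      have ih' := ih (by omega)
      rw [show n + (d+1) = (n+d) + 1 by omega, newton_succ, ih', mul_zero,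
        esymm_gt (by omega), zero_smul, sub_zero]

lemma charpoly_as_sum {n : ℕ} (A : Matrix (Fin n) (Fin n) ℝ) :
    Matrix.charpoly A =
      ∑ j ∈ Finset.range (n + 1), Polynomial.C ((-1:ℝ)^j * esymm j A) * (X : ℝ[X])^(n - j) := by
  have h1 : ∀ j ∈ Finset.range (n + 1),
      Polynomial.C ((-1:ℝ)^j * esymm j A) * (X : ℝ[X])^(n - j)
        = Polynomial.C ((Matrix.charpoly A).coeff (n - j)) * (X : ℝ[X])^(n - j) := by
    intro j hj
    rw [Finset.mem_range] at hj
    rw [esymm_le (by omega), ← mul_assoc, ← pow_add]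
    norm_num
  have h3 := Finset.sum_range_reflect
    (fun i => Polynomial.C ((Matrix.charpoly A).coeff i) * (X : ℝ[X])^i) (n+1)
  simp only [Nat.add_sub_cancel] at h3
  rw [Finset.sum_congr rfl h1, h3]
  simp only [Polynomial.C_mul_X_pow_eq_monomial]
  exact ((Matrix.charpoly A).as_sum_range' (n+1) (by rw [charpoly_natDeg]; omega))

noncomputable def Bpoly {n : ℕ} (A : Matrix (Fin n) (Fin n) ℝ) : Matrix (Fin n) (Fin n) ℝ[X] :=
  ∑ m ∈ Finset.range n, ((-1 : ℝ[X])^m * (X : ℝ[X])^(n-1-m)) • (newton m A).map Polynomial.C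

lemma charpoly_as_sum' {n : ℕ} (A : Matrix (Fin n) (Fin n) ℝ) :
    Matrix.charpoly A = (X : ℝ[X])^n -
      ∑ m ∈ Finset.range n, ((-1 : ℝ[X])^m * (X : ℝ[X])^(n-1-m) * Polynomial.C (esymm (m+1) A)) := by
  rw [charpoly_as_sum A,
    Finset.sum_range_succ' (fun j => Polynomial.C ((-1:ℝ)^j * esymm j A) * (X : ℝ[X])^(n - j))]
  rw [esymm_zero, sub_eq_add_neg, ← Finset.sum_neg_distrib, add_comm]
  congr 1
  · simp
  · apply Finset.sum_congr rfl
    intro m hm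
    rw [_root_.map_mul, map_pow, map_neg, _root_.map_one, show n - (m+1) = n - 1 - m by omega]
    ring

lemma smul_one_map_C {n : ℕ} (e : ℝ) :
    ((e • (1 : Matrix (Fin n) (Fin n) ℝ)).map Polynomial.C)
      = Polynomial.C e • (1 : Matrix (Fin n) (Fin n) ℝ[X]) := by
  ext i j
  by_cases h : i = j <;> simp [Matrix.map_apply, Matrix.one_apply, h]

lemma charmatrix_eq {n : ℕ} (A : Matrix (Fin n) (Fin n) ℝ) :
    charmatrix A = (X : ℝ[X]) • (1 : Matrix (Fin n) (Fin n) ℝ[X]) - A.map Polynomial.C := by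
  ext i j
  by_cases h : i = j <;> simp [charmatrix_apply, Matrix.one_apply, h, Matrix.diagonal_apply, Matrix.map_apply]

lemma mul_newton_eq {n : ℕ} (A : Matrix (Fin n) (Fin n) ℝ) (m : ℕ) :
    A * newton m A = esymm (m+1) A • (1 : Matrix (Fin n) (Fin n) ℝ) - newton (m+1) A := by
  rw [newton_succ]; abel

lemma charmatrix_mul_Bpoly {n : ℕ} (A : Matrix (Fin n) (Fin n) ℝ) :
    charmatrix A * Bpoly A = Matrix.charpoly A • (1 : Matrix (Fin n) (Fin n) ℝ[X]) := by
  set f : ℕ → Matrix (Fin n) (Fin n) ℝ[X] :=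
    fun m => ((-1 : ℝ[X])^m * (X : ℝ[X])^(n-m)) • (newton m A).map Polynomial.C with hf
  have key : ∀ m ∈ Finset.range n,
      charmatrix A * (((-1 : ℝ[X])^m * (X : ℝ[X])^(n-1-m)) • (newton m A).map Polynomial.C)
        = (f m - f (m+1)) -
          ((-1 : ℝ[X])^m * (X : ℝ[X])^(n-1-m) * Polynomial.C (esymm (m+1) A)) • 1 := by
    intro m hm
    rw [Finset.mem_range] at hm
    rw [Matrix.mul_smul, charmatrix_eq, sub_mul, Matrix.smul_mul, Matrix.one_mul,
      ← Matrix.map_mul, mul_newton_eq, Matrix.map_sub _ (fun a b => Polynomial.C_sub), smul_one_map_C, smul_sub, smul_sub, hf]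
    beta_reduce
    rw [show n - m = (n - 1 - m) + 1 by omega, show n - (m+1) = n - 1 - m by omega]
    rw [pow_succ (-1 : ℝ[X]) m, pow_succ (X : ℝ[X]) (n-1-m)]
    module
  rw [Bpoly, Finset.mul_sum, Finset.sum_congr rfl key, Finset.sum_sub_distrib,
    Finset.sum_range_sub' f, hf]
  simp only [newton_card_eq_zero A, show (newton 0 A : Matrix (Fin n) (Fin n) ℝ) = 1 from rfl,
    Matrix.map_zero _ (Polynomial.C_0), smul_zero, sub_zero, pow_zero,
    Nat.sub_zero, one_mul, Matrix.map_one _ (Polynomial.C_0) (Polynomial.C_1)]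
  rw [charpoly_as_sum' A, ← Finset.sum_smul, sub_smul]

lemma charpoly_sub_rank_one {n : ℕ} (A : Matrix (Fin n) (Fin n) ℝ) (X : Fin n → ℝ) :
    Matrix.charpoly (A - vecMulVec X X) = Matrix.charpoly A +
      (fun i => Polynomial.C (X i)) ⬝ᵥ (Bpoly A) *ᵥ (fun i => Polynomial.C (X i)) := by
  classical
  set K := FractionRing ℝ[X]
  set φ : ℝ[X] →+* K := algebraMap ℝ[X] K with hφ
  have hinj : Function.Injective φ := IsFractionRing.injective ℝ[X] K
  apply hinj
  set u : Fin n → K := fun i => φ (Polynomial.C (X i)) with hu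
  set M' : Matrix (Fin n) (Fin n) K := (charmatrix A).map φ with hM'
  have hdet : M'.det = φ (Matrix.charpoly A) := by
    have h := φ.map_det (charmatrix A)
    rw [RingHom.mapMatrix_apply] at h
    rw [hM', Matrix.charpoly, h]
  have hpne : φ (Matrix.charpoly A) ≠ 0 := by
    intro h
    exact (Matrix.charpoly_monic A).ne_zero (hinj (by simpa using h))
  have hU : IsUnit M'.det := by
    rw [hdet]
    exact isUnit_iff_ne_zero.mpr hpne
  -- charmatrix of the perturbed matrix
  have hchm : charmatrix (A - vecMulVec X X)
      = charmatrix A + (vecMulVec X X).map Polynomial.C := by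
    ext i j
    by_cases h : i = j <;>
      simp [charmatrix_apply, Matrix.diagonal_apply, h, Matrix.map_apply, Matrix.add_apply,
        Matrix.sub_apply, map_sub, sub_add_eq_add_sub]
    · ring
    · ring
  have hmap : (charmatrix (A - vecMulVec X X)).map φ = M' + replicateCol Unit u * replicateRow Unit u := by
    rw [hchm, Matrix.map_add _ (fun a b => map_add φ a b), ← Matrix.vecMulVec_eq]
    congr 1
    ext i j
    simp [Matrix.map_apply, Matrix.vecMulVec_apply, _root_.map_mul, hu]
  -- the matrix determinant lemma over the field K
  have hlemma := Matrix.det_add_replicateCol_mul_replicateRow (ι := Unit) hU u u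
  -- B' is det • inverse
  have hB' : (Bpoly A).map φ = φ (Matrix.charpoly A) • M'⁻¹ := by
    have h1 : M' * (Bpoly A).map φ = φ (Matrix.charpoly A) • (1 : Matrix (Fin n) (Fin n) K) := by
      rw [hM', ← Matrix.map_mul, charmatrix_mul_Bpoly]
      ext i j
      by_cases h : i = j <;> simp [Matrix.map_apply, Matrix.one_apply, h]
    calc (Bpoly A).map φ = M'⁻¹ * (M' * (Bpoly A).map φ) := by
          rw [← Matrix.mul_assoc, Matrix.nonsing_inv_mul _ hU, Matrix.one_mul]
      _ = φ (Matrix.charpoly A) • M'⁻¹ := by rw [h1, Matrix.mul_smul, Matrix.mul_one]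
  -- 1x1 determinant
  have h11 : (1 + replicateRow Unit u * M'⁻¹ * replicateCol Unit u).det = 1 + u ⬝ᵥ M'⁻¹ *ᵥ u := by
    rw [det_unique]
    simp only [Matrix.add_apply, Matrix.mul_apply, Matrix.replicateRow_apply, Matrix.replicateCol_apply,
      Matrix.one_apply_eq, dotProduct, Matrix.mulVec, Finset.mul_sum]
    congr 1
    rw [Finset.sum_comm]
    exact Finset.sum_congr rfl (fun i _ => by rw [Finset.sum_mul]; exact Finset.sum_congr rfl (fun j _ => by ring))
  -- push φ through the quadratic form
  have hquad : φ ((fun i => Polynomial.C (X i)) ⬝ᵥ (Bpoly A) *ᵥ (fun i => Polynomial.C (X i)))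
      = u ⬝ᵥ ((Bpoly A).map φ) *ᵥ u := by
    simp [dotProduct, Matrix.mulVec, map_sum, _root_.map_mul, Matrix.map_apply, hu]
  have hd2 := φ.map_det (charmatrix (A - vecMulVec X X))
  rw [RingHom.mapMatrix_apply, hmap, hlemma, hdet, h11] at hd2
  rw [map_add, hquad, hB', Matrix.smul_mulVec, dotProduct_smul,
    Matrix.charpoly, hd2, smul_eq_mul]
  ring

lemma quad_Bpoly {n : ℕ} (A : Matrix (Fin n) (Fin n) ℝ) (X : Fin n → ℝ) :
    (fun i => Polynomial.C (X i)) ⬝ᵥ (Bpoly A) *ᵥ (fun i => Polynomial.C (X i))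
      = ∑ m ∈ Finset.range n, (-1 : ℝ[X])^m * (Polynomial.X : ℝ[X])^(n-1-m)
          * Polynomial.C (X ⬝ᵥ newton m A *ᵥ X) := by
  simp only [Bpoly, dotProduct, Matrix.mulVec, Matrix.sum_apply, Matrix.smul_apply,
    Matrix.map_apply, Finset.mul_sum, Finset.sum_mul, _root_.map_mul, map_sum, smul_eq_mul]
  refine Finset.sum_comm.trans ?_
  refine (Finset.sum_congr rfl fun x _ => Finset.sum_comm).trans ?_
  refine Finset.sum_comm.trans ?_
  refine Finset.sum_congr rfl fun m _ => Finset.sum_comm.trans ?_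
  exact Finset.sum_congr rfl fun x _ => Finset.sum_congr rfl fun y _ => by ring

lemma esymm_sub {n : ℕ} (A : Matrix (Fin n) (Fin n) ℝ) (X : Fin n → ℝ) (k : ℕ) :
    esymm (k+1) (A - vecMulVec X X) = esymm (k+1) A - X ⬝ᵥ newton k A *ᵥ X := by
  by_cases hk : k + 1 ≤ n
  · set q : ℝ := X ⬝ᵥ newton k A *ᵥ X with hq
    have hS : (∑ m ∈ Finset.range n, (-1 : ℝ[X])^m * (Polynomial.X : ℝ[X])^(n-1-m)
          * Polynomial.C (X ⬝ᵥ newton m A *ᵥ X)).coeff (n - (k+1)) = (-1:ℝ)^k * q := by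
      rw [Polynomial.finset_sum_coeff]
      rw [Finset.sum_eq_single k]
      · rw [show ((-1 : ℝ[X])^k * (Polynomial.X : ℝ[X])^(n-1-k) * Polynomial.C q)
            = Polynomial.C ((-1:ℝ)^k * q) * (Polynomial.X : ℝ[X])^(n-1-k) by
            rw [_root_.map_mul, map_pow, map_neg, _root_.map_one]; ring]
        rw [Polynomial.coeff_C_mul, Polynomial.coeff_X_pow, if_pos (by omega), mul_one]
      · intro m hm hne
        rw [Finset.mem_range] at hm
        rw [show ((-1 : ℝ[X])^m * (Polynomial.X : ℝ[X])^(n-1-m) * Polynomial.C (X ⬝ᵥ newton m A *ᵥ X))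
            = Polynomial.C ((-1:ℝ)^m * (X ⬝ᵥ newton m A *ᵥ X)) * (Polynomial.X : ℝ[X])^(n-1-m) by
            rw [_root_.map_mul, map_pow, map_neg, _root_.map_one]; ring]
        rw [Polynomial.coeff_C_mul, Polynomial.coeff_X_pow, if_neg (by omega), mul_zero]
      · intro hcon
        exact absurd (Finset.mem_range.2 (by omega)) hcon
    rw [esymm_le hk, esymm_le hk, charpoly_sub_rank_one, quad_Bpoly, Polynomial.coeff_add, hS]
    rw [mul_add, ← mul_assoc, ← pow_add]
    have : (-1:ℝ) ^ (k + 1 + k) = -1 := by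
      rw [show k + 1 + k = 2*k + 1 by omega, pow_succ, pow_mul]
      norm_num
    rw [this]
    ring
  · rw [esymm_gt (by omega), esymm_gt (by omega), newton_ge_eq_zero A k (by omega)]
    simp

lemma newton_mulVec {n : ℕ} (A : Matrix (Fin n) (Fin n) ℝ) (X : Fin n → ℝ) (k : ℕ) :
    newton k (A - vecMulVec X X) *ᵥ X = newton k A *ᵥ X := by
  induction k with
  | zero => rfl
  | succ k ih =>
      have hP : ∀ w : Fin n → ℝ, vecMulVec X X *ᵥ w = (X ⬝ᵥ w) • X := by
        intro w
        ext i
        simp only [Matrix.mulVec, dotProduct, vecMulVec_apply, Pi.smul_apply, smul_eq_mul,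
          Finset.sum_mul]
        exact Finset.sum_congr rfl fun j _ => by ring
      rw [newton_succ, newton_succ, Matrix.sub_mulVec, Matrix.sub_mulVec,
        Matrix.smul_mulVec, Matrix.smul_mulVec, Matrix.one_mulVec,
        ← Matrix.mulVec_mulVec, ← Matrix.mulVec_mulVec, ih, Matrix.sub_mulVec, hP,
        esymm_sub, sub_smul]
      abel

lemma trace_transpose_mul_vecMulVec {n : ℕ} (T : Matrix (Fin n) (Fin n) ℝ) (X : Fin n → ℝ) :
    (Tᵀ * vecMulVec X X).trace = X ⬝ᵥ T *ᵥ X := by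
  simp only [Matrix.trace, Matrix.diag, Matrix.mul_apply, Matrix.transpose_apply,
    vecMulVec_apply, dotProduct, Matrix.mulVec, Finset.mul_sum]
  rw [Finset.sum_comm]
  exact Finset.sum_congr rfl fun i _ => Finset.sum_congr rfl fun j _ => by ring


/-- ⟨T_k(A − X⊗X), X⊗X⟩ = ⟨T_k(A), X⊗X⟩ (Frobenius inner product). -/
theorem newton_rank_one_invariance {n : ℕ} (k : ℕ) (hk : 1 ≤ k)
    (A : Matrix (Fin n) (Fin n) ℝ) (hA : A.IsSymm) (X : Fin n → ℝ) :
    ((newton k (A - Matrix.vecMulVec X X))ᵀ * Matrix.vecMulVec X X).trace =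
      ((newton k A)ᵀ * Matrix.vecMulVec X X).trace := by
  rw [trace_transpose_mul_vecMulVec, trace_transpose_mul_vecMulVec, newton_mulVec]
end

section
/- Let A and B be 4×4 real symmetric matrices in Γ₂⁺ with σ₁(B) > 0. Then (σ₁(A)/σ₁(B))·⟨T₁(B), A⟩ ≥ (σ₁(A)²/σ₁(B)²)·σ₂(B) + σ₂(A). -/
open Matrix

noncomputable def sigma1 (A : Matrix (Fin 4) (Fin 4) ℝ) : ℝ := A.trace

noncomputable def sigma2 (A : Matrix (Fin 4) (Fin 4) ℝ) : ℝ := (A.trace ^ 2 - (A * A).trace) / 2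

/-- First Newton transform `T₁(A) = tr(A)·I − A`. -/
noncomputable def newton1 (A : Matrix (Fin 4) (Fin 4) ℝ) : Matrix (Fin 4) (Fin 4) ℝ :=
  A.trace • (1 : Matrix (Fin 4) (Fin 4) ℝ) - A

lemma trace_mul_self_nonneg {M : Matrix (Fin 4) (Fin 4) ℝ} (h : M.IsSymm) :
    0 ≤ (M * M).trace := by
  rw [Matrix.trace]
  apply Finset.sum_nonneg
  intro i _
  rw [Matrix.diag_apply, Matrix.mul_apply]
  apply Finset.sum_nonneg
  intro j _
  rw [h.apply i j]
  exact mul_self_nonneg _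

/-- (σ₁(A)/σ₁(B))·⟨T₁(B), A⟩ ≥ (σ₁(A)²/σ₁(B)²)·σ₂(B) + σ₂(A). -/
theorem newton_pairing_intermediate {A B : Matrix (Fin 4) (Fin 4) ℝ}
    (hA : A.IsSymm) (hB : B.IsSymm)
    (hA1 : 0 < sigma1 A) (hA2 : 0 < sigma2 A)
    (hB1 : 0 < sigma1 B) (hB2 : 0 < sigma2 B) :
    (sigma1 A / sigma1 B) * (newton1 B * A).trace ≥
      (sigma1 A ^ 2 / sigma1 B ^ 2) * sigma2 B + sigma2 A := by
  set t : ℝ := sigma1 A / sigma1 B with ht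
  have hBsymm : (t • B).IsSymm := hB.smul t
  have hMsymm : (A - t • B).IsSymm := hA.sub hBsymm
  have key := trace_mul_self_nonneg hMsymm
  have expand : (A - t • B) * (A - t • B)
      = A * A - t • (A * B) - t • (B * A) + (t * t) • (B * B) := by
    simp [sub_mul, mul_sub, Matrix.smul_mul, Matrix.mul_smul, smul_smul, smul_sub]
    abel
  rw [expand] at key
  simp only [Matrix.trace_add, Matrix.trace_sub, Matrix.trace_smul, smul_eq_mul] at key
  have hcomm : (B * A).trace = (A * B).trace := Matrix.trace_mul_comm B A
  rw [hcomm] at key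
  -- key : 0 ≤ (A*A).trace - t*(A*B).trace - t*(A*B).trace + t*t*(B*B).trace
  have htrace : (newton1 B * A).trace = B.trace * A.trace - (B * A).trace := by
    simp [newton1, Matrix.sub_mul, Matrix.smul_mul, Matrix.trace_sub, Matrix.trace_smul]
  rw [htrace, hcomm]
  have ht' : t * sigma1 B = sigma1 A := by
    rw [ht]; exact div_mul_cancel₀ _ hB1.ne'
  have hsq : sigma1 A ^ 2 / sigma1 B ^ 2 = t ^ 2 := by
    rw [ht, div_pow]
  rw [hsq]
  simp only [sigma1] at ht' hB1 hA1
  simp only [sigma2]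
  nlinarith [key, ht', sq_nonneg t]
end
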